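/- Let (R, m) be a complete Noetherian local ring, a an ideal, and p a minimal prime of a. If q ∈ Coass_R(\widehat{R_p}) (the p R_p-adic completion of R_p viewed as an R-module), then q ⊆ p. -/

import Mathlib

/-!
Every `s ∉ p` becomes a unit in `R_p`, so it acts surjectively on the `R_p`-module `\widehat{R_p}`.
Hence `s` is a nonzerodivisor on `Hom_R(\widehat{R_p}, E)` for every `E`, and a nonzerodivisor
lies in no associated prime; so every coassociated prime is contained in `p`.
As `Coass` quantifies over all injective hulls of `R/m`, one such hull must exist: a maximal
essential extension of `R/m` inside an injective module is a retract of it, hence injective.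
-/

open CategoryTheory CategoryTheory.Limits IsLocalRing DirectSum

noncomputable section

/-- The inverse system `n ↦ M ⧸ aⁿM` with the natural projection maps. -/
def formalQuotDiagram (R : Type) [CommRing R] (a : Ideal R)
    (M : Type) [AddCommGroup M] [Module R M] : ℕᵒᵖ ⥤ ModuleCat R :=
  CategoryTheory.Functor.ofOpSequence
    (X := fun n => ModuleCat.of R (M ⧸ (a ^ n • ⊤ : Submodule R M)))
    (fun n => ModuleCat.ofHom (Submodule.mapQ _ _ LinearMap.id (by
      simpa using Submodule.smul_mono (R := R) (M := M) (N := ⊤) (Ideal.pow_le_pow_right (I := a) n.le_succ) le_rfl)))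

/-- Formal local cohomology `𝔉ⁱ_a(M) = lim_n Hⁱ_m(M ⧸ aⁿM)`. -/
def formalLocalCohomology (R : Type) [CommRing R] [IsLocalRing R] (a : Ideal R) (i : ℕ)
    (M : Type) [AddCommGroup M] [Module R M] : ModuleCat R :=
  limit (formalQuotDiagram R a M ⋙ localCohomology (maximalIdeal R) i)

/-- Attached primes of a module: primes of the form `Ann(M/N)`. -/
def attachedPrimes (R : Type) [CommRing R] (M : Type) [AddCommGroup M] [Module R M] :
    Set (Ideal R) :=
  {p | p.IsPrime ∧ ∃ N : Submodule R M, p = Module.annihilator R (M ⧸ N)}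

/-- `E` is an injective hull (injective essential extension) of `N`. -/
def IsInjectiveHull (R : Type) [CommRing R] (N : Type) [AddCommGroup N] [Module R N]
    (E : Type) [AddCommGroup E] [Module R E] : Prop :=
  Module.Injective R E ∧ ∃ f : N →ₗ[R] E, Function.Injective f ∧
    ∀ S : Submodule R E, S ≠ ⊥ → S ⊓ LinearMap.range f ≠ ⊥

/-- The module `⊕_{m maximal} R/m`, whose injective hull is the minimal injective
cogenerator `E_R`. -/
def cogenerator (R : Type) [CommRing R] : Type :=
  ⨁ m : MaximalSpectrum R, R ⧸ m.asIdeal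

instance (R : Type) [CommRing R] : AddCommGroup (cogenerator R) := by
  unfold cogenerator; infer_instance

instance (R : Type) [CommRing R] : Module R (cogenerator R) := by
  unfold cogenerator; infer_instance

/-- Richardson's cosupport, via colocalization: `p ∈ CoSupp M` iff
`ᵖM = D_{R_p}((D_R M)_p) ≠ 0`, where `D` denotes duals into minimal injective
cogenerators (injective hulls of the direct sum of the residue fields). -/
def CoSupport (R : Type) [CommRing R] (M : Type) [AddCommGroup M] [Module R M] :
    Set (PrimeSpectrum R) :=
  {p | ∀ (E : Type) [AddCommGroup E] [Module R E], IsInjectiveHull R (cogenerator R) E →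
       ∀ (Ep : Type) [AddCommGroup Ep] [Module (Localization.AtPrime p.asIdeal) Ep],
         IsInjectiveHull (Localization.AtPrime p.asIdeal)
           (cogenerator (Localization.AtPrime p.asIdeal)) Ep →
       Nontrivial ((LocalizedModule p.asIdeal.primeCompl (M →ₗ[R] E))
          →ₗ[Localization.AtPrime p.asIdeal] Ep)}

/-- Coassociated primes over a local ring: `Coass M = Ass Hom_R(M, E(R/m))`. -/
def Coassociated (R : Type) [CommRing R] [IsLocalRing R]
    (M : Type) [AddCommGroup M] [Module R M] : Set (PrimeSpectrum R) :=
  {p | ∀ (E : Type) [AddCommGroup E] [Module R E],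
        IsInjectiveHull R (R ⧸ maximalIdeal R) E →
        p.asIdeal ∈ associatedPrimes R (M →ₗ[R] E)}

/-- The height of an ideal. -/
def idealHeight (R : Type) [CommRing R] (a : Ideal R) : ℕ∞ :=
  sInf {n | ∃ p : PrimeSpectrum R, a ≤ p.asIdeal ∧ Order.height p = n}

/-- The `a`-torsion submodule `H⁰_a(M) = ∪ₙ (0 :_M aⁿ)`. -/
def idealTorsion (R : Type) [CommRing R] (a : Ideal R)
    (M : Type) [AddCommGroup M] [Module R M] : Submodule R M :=
  ⨆ n : ℕ, Submodule.torsionBySet R M ((a ^ n : Ideal R) : Set R)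

/-- A Noetherian local ring is Gorenstein iff it has finite injective dimension
over itself, i.e. `Extⁱ(N, R) = 0` for all `i` larger than some bound and all `N`. -/
def IsGorensteinLocalRing (R : Type) [CommRing R] : Prop :=
  IsNoetherianRing R ∧ IsLocalRing R ∧
    ∃ n : ℕ, ∀ i : ℕ, n < i → ∀ N : ModuleCat R,
      Subsingleton (((Ext R (ModuleCat R) i).obj (Opposite.op N)).obj (ModuleCat.of R R))

end

universe u v

theorem exists_maximal_disjoint {α : Type*} [CompleteLattice α] [IsCompactlyGenerated α] (a : α) :
    ∃ c, Maximal (Disjoint · a) c :=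
  zorn_le₀ {c | Disjoint c a} fun c hc hchain =>
    ⟨sSup c, hchain.directedOn.disjoint_sSup_left.2 hc, fun _ => le_sSup⟩

theorem Module.exists_embedding_into_injective (R : Type u) [Ring R] [Small.{v} R] (N : Type v)
    [AddCommGroup N] [Module R N] : ∃ (I : Type v) (_ : AddCommGroup I) (_ : Module R I),
      Module.Injective R I ∧ ∃ f : N →ₗ[R] I, Function.Injective f := by
  let I : ModuleCat.{v} R := Injective.under (ModuleCat.of R N)
  have : CategoryTheory.Injective (ModuleCat.of R I) := Injective.injective_under _
  exact ⟨I, _, _, Module.injective_module_of_injective_object R I,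
    (Injective.ι (ModuleCat.of R N)).hom, (ModuleCat.mono_iff_injective _).mp inferInstance⟩

theorem Module.Injective.of_leftInverse {R : Type u} [Ring R] {Q E : Type v} [AddCommGroup Q]
    [Module R Q] [AddCommGroup E] [Module R E] [Module.Injective R Q] (ι : E →ₗ[R] Q)
    (ρ : Q →ₗ[R] E) (h : Function.LeftInverse ρ ι) : Module.Injective R E :=
  ⟨fun _ _ _ _ _ _ f hf g => by
    obtain ⟨g', hg'⟩ := Module.Injective.out f hf (ι ∘ₗ g)
    exact ⟨ρ ∘ₗ g', fun x => by simp [hg', h (g x)]⟩⟩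

namespace Submodule

variable {R : Type u} [Ring R] {M : Type v} [AddCommGroup M] [Module R M]

def IsEssentialIn (K W : Submodule R M) : Prop :=
  K ≤ W ∧ ∀ y ∈ W, y ≠ 0 → ∃ r : R, r • y ∈ K ∧ r • y ≠ 0

theorem isEssentialIn_refl (K : Submodule R M) : K.IsEssentialIn K :=
  ⟨le_rfl, fun y hy hy0 => ⟨1, by simpa using hy, by simpa using hy0⟩⟩

theorem IsEssentialIn.trans {K E W : Submodule R M} (hKE : K.IsEssentialIn E)
    (hEW : E.IsEssentialIn W) : K.IsEssentialIn W := by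
  refine ⟨hKE.1.trans hEW.1, fun y hy hy0 => ?_⟩
  obtain ⟨r, hrE, hr0⟩ := hEW.2 y hy hy0
  obtain ⟨s, hsK, hs0⟩ := hKE.2 _ hrE hr0
  exact ⟨s * r, by rwa [mul_smul], by rwa [mul_smul]⟩

theorem exists_maximal_isEssentialIn (K : Submodule R M) :
    ∃ E, Maximal K.IsEssentialIn E := by
  have hchains : ∀ c ⊆ {W | K.IsEssentialIn W}, IsChain (· ≤ ·) c → ∀ y ∈ c,
      ∃ ub ∈ {W | K.IsEssentialIn W}, ∀ W ∈ c, W ≤ ub := by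
    intro c hc hchain y hy
    refine ⟨sSup c, ⟨(hc hy).1.trans (le_sSup hy), fun z hz hz0 => ?_⟩, fun _ => le_sSup⟩
    obtain ⟨W, hW, hzW⟩ := (mem_sSup_of_directed ⟨y, hy⟩ hchain.directedOn).mp hz
    exact (hc hW).2 z hzW hz0
  obtain ⟨E, -, hE⟩ := zorn_le_nonempty₀ _ hchains K K.isEssentialIn_refl
  exact ⟨E, hE⟩

theorem map_mkQ_isEssentialIn_top_of_maximal_disjoint {E C : Submodule R M}
    (hC : Maximal (Disjoint · E) C) : (E.map C.mkQ).IsEssentialIn ⊤ := by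
  refine ⟨le_top, fun z _ hz0 => ?_⟩
  obtain ⟨y, rfl⟩ := C.mkQ_surjective z
  have hyC : y ∉ C := fun hy => hz0 ((Quotient.mk_eq_zero C).mpr hy)
  have hnot : ¬Disjoint (C ⊔ span R {y}) E := fun hdisj =>
    hyC (hC.2 hdisj le_sup_left (mem_sup_right (mem_span_singleton_self y)))
  obtain ⟨e, ⟨hey, heE⟩, he0⟩ := (Submodule.ne_bot_iff _).mp (disjoint_iff.not.mp hnot)
  obtain ⟨c, hc, w, hw, rfl⟩ := mem_sup.mp hey
  obtain ⟨r, rfl⟩ := mem_span_singleton.mp hw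
  have hmk : r • C.mkQ y = C.mkQ (c + r • y) := by simp [(Quotient.mk_eq_zero C).mpr hc]
  refine ⟨r, hmk ▸ mem_map_of_mem heE, fun h => he0 ?_⟩
  rw [hmk, mkQ_apply, Quotient.mk_eq_zero] at h
  exact (disjoint_def.mp hC.1) _ h heE

/-- Extend `E ↪ M` along `E ↪ M ⧸ C`, `C` maximal with `C ⊓ E = ⊥`: `E` is essential in the range
of the extension, so maximality of `E` forces that range back into `E`. -/
theorem exists_retraction_of_maximal_isEssentialIn [Module.Injective R M] {K E : Submodule R M}
    (hE : Maximal K.IsEssentialIn E) : ∃ ρ : M →ₗ[R] E, Function.LeftInverse ρ E.subtype := by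
  obtain ⟨C, hC⟩ := exists_maximal_disjoint E
  have hinj : Function.Injective (C.mkQ ∘ₗ E.subtype) := by
    rw [← LinearMap.ker_eq_bot, LinearMap.ker_comp, ker_mkQ, ← disjoint_iff_comap_eq_bot]
    exact hC.1.symm
  obtain ⟨h, hh⟩ := Module.Injective.out (C.mkQ ∘ₗ E.subtype) hinj E.subtype
  have hE_range : E.IsEssentialIn (LinearMap.range h) := by
    refine ⟨fun e he => ⟨C.mkQ e, hh ⟨e, he⟩⟩, ?_⟩
    rintro _ ⟨z, rfl⟩ hz0
    obtain ⟨r, ⟨e, heE, hre⟩, hr0⟩ :=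
      (map_mkQ_isEssentialIn_top_of_maximal_disjoint hC).2 z trivial (by rintro rfl; simp at hz0)
    have hhre : r • h z = e := by rw [← map_smul, ← hre]; exact hh ⟨e, heE⟩
    exact ⟨r, hhre ▸ heE, fun h0 => hr0 (by rw [← hre, ← hhre, h0, map_zero])⟩
  have hrange : LinearMap.range h ≤ E := hE.2 (hE.1.trans hE_range) hE_range.1
  exact ⟨(h ∘ₗ C.mkQ).codRestrict E fun y => hrange ⟨_, rfl⟩, fun e => Subtype.ext (hh e)⟩

end Submodule

theorem exists_isInjectiveHull (R : Type) [CommRing R] (N : Type) [AddCommGroup N] [Module R N] :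
    ∃ (E : Type) (_ : AddCommGroup E) (_ : Module R E), IsInjectiveHull R N E := by
  obtain ⟨I, _, _, _, f, hf⟩ := Module.exists_embedding_into_injective R N
  obtain ⟨E, hE⟩ := (LinearMap.range f).exists_maximal_isEssentialIn
  obtain ⟨ρ, hρ⟩ := Submodule.exists_retraction_of_maximal_isEssentialIn hE
  let f' : N →ₗ[R] E := f.codRestrict E fun n => hE.1.1 ⟨n, rfl⟩
  refine ⟨E, _, _, Module.Injective.of_leftInverse E.subtype ρ hρ, f',
    fun x y hxy => hf congr(($hxy : I)), fun S hS => ?_⟩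
  obtain ⟨y, hyS, hy0⟩ := (Submodule.ne_bot_iff S).mp hS
  obtain ⟨r, ⟨n, hn⟩, hr0⟩ := hE.1.2 y y.2 (by simpa using hy0)
  refine (Submodule.ne_bot_iff _).mpr ⟨r • y, ⟨S.smul_mem r hyS, n, Subtype.ext hn⟩, ?_⟩
  exact fun h => hr0 congr(($h : I))

theorem IsAssociatedPrime.notMem_of_isSMulRegular {R M : Type*} [CommSemiring R]
    [AddCommMonoid M] [Module R M] {P : Ideal R} (hP : IsAssociatedPrime P M) {s : R} (hs : IsSMulRegular M s) :
    s ∉ P := by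
  obtain ⟨hprime, x, rfl⟩ := hP
  rintro ⟨n, hn⟩
  have hx : x = 0 := (hs.pow n).right_eq_zero_of_smul (Submodule.mem_colon_singleton.mp hn)
  apply hprime.ne_top
  rw [hx, eq_top_iff]
  exact fun r _ => Ideal.le_radical (Submodule.mem_colon_singleton.mpr (smul_zero r))

theorem LinearMap.isSMulRegular_of_surjective_smul {R M N : Type*} [CommSemiring R]
    [AddCommMonoid M] [Module R M] [AddCommMonoid N] [Module R N] {s : R}
    (hs : Function.Surjective (s • · : M → M)) :
    IsSMulRegular (M →ₗ[R] N) s := fun f g hfg => by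
  ext m
  obtain ⟨m', rfl⟩ := hs m
  simpa using congr($hfg m')

theorem surjective_smul_of_isUnit_algebraMap {R S M : Type*} [CommSemiring R] [Semiring S]
    [Algebra R S] [AddCommMonoid M] [Module R M] [Module S M] [IsScalarTower R S M] {s : R}
    (hs : IsUnit (algebraMap R S s)) : Function.Surjective (s • · : M → M) := fun m =>
  ⟨(hs.unit⁻¹ : Sˣ) • m, by
    show s • _ = m
    rw [← algebraMap_smul S s, Units.smul_def, smul_smul, hs.mul_val_inv, one_smul]⟩

attribute [local instance] RestrictScalars.moduleOrig in
theorem RestrictScalars.notMem_associatedPrimes_linearMap {R S M N : Type*} [CommSemiring R]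
    [Semiring S] [Algebra R S] [AddCommGroup M] [Module S M] [AddCommGroup N] [Module R N]
    {P : Ideal R} (hP : P ∈ associatedPrimes R (RestrictScalars R S M →ₗ[R] N)) {s : R}
    (hs : IsUnit (algebraMap R S s)) : s ∉ P :=
  IsAssociatedPrime.notMem_of_isSMulRegular hP
    (LinearMap.isSMulRegular_of_surjective_smul (surjective_smul_of_isUnit_algebraMap hs))

theorem stmt18_general (R : Type) [CommRing R] [IsLocalRing R]
    (p : PrimeSpectrum R)
    (q : PrimeSpectrum R)
    (hq : q ∈ @Coassociated R _ _ (RestrictScalars R (Localization.AtPrime p.asIdeal)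
      (AdicCompletion
        (Ideal.map (algebraMap R (Localization.AtPrime p.asIdeal)) p.asIdeal)
        (Localization.AtPrime p.asIdeal))) _ (@RestrictScalars.module _ _ _ _ AddCommGroup.toAddCommMonoid _ _ _)) :
    q.asIdeal ≤ p.asIdeal := by
  obtain ⟨E, _, _, hE⟩ := exists_isInjectiveHull R (R ⧸ maximalIdeal R)
  intro s hsq
  by_contra hsp
  have hunit : IsUnit (algebraMap R (Localization.AtPrime p.asIdeal) s) :=
    IsLocalization.map_units _ (⟨s, hsp⟩ : p.asIdeal.primeCompl)
  exact RestrictScalars.notMem_associatedPrimes_linearMap (hq E hE) hunit hsq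

/-- over a complete Noetherian local ring, if `p` is a minimal prime
of `a` and `q ∈ Coass_R (p R_p-adic completion of R_p)`, then `q ⊆ p`. -/
theorem stmt18 (R : Type) [CommRing R] [IsNoetherianRing R] [IsLocalRing R]
    [IsAdicComplete (IsLocalRing.maximalIdeal R) R]
    (a : Ideal R) (p : PrimeSpectrum R) (hap : a ≤ p.asIdeal)
    (hmin : ∀ r : PrimeSpectrum R, a ≤ r.asIdeal → r.asIdeal ≤ p.asIdeal →
      r.asIdeal = p.asIdeal)
    (q : PrimeSpectrum R)
    (hq : q ∈ @Coassociated R _ _ (RestrictScalars R (Localization.AtPrime p.asIdeal)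
      (AdicCompletion
        (Ideal.map (algebraMap R (Localization.AtPrime p.asIdeal)) p.asIdeal)
        (Localization.AtPrime p.asIdeal))) _ (@RestrictScalars.module _ _ _ _ AddCommGroup.toAddCommMonoid _ _ _)) :
    q.asIdeal ≤ p.asIdeal :=
  stmt18_general R p q hq
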